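/- arXiv:2305.13165 — 4 statements merged into one kernel-verified Lean document; each statement's English description precedes it below -/
import Mathlib

section
/- Let $s_1 \ge s_2 \ge 0$ and $\tilde{s}_1 \ge \tilde{s}_2 > 0$, and let $x, y$ be fixed vectors whose Gram matrix has eigenvalues $\tilde{s}_1^2, \tilde{s}_2^2$. Then the minimum of $b^Tb\, x^Tx - 2a^Tb\, x^Ty + a^Ta\, y^Ty$ over reals $a^Ta, b^Tb \ge 0$ and $a^Tb$ with $(a^Tb)^2 \le a^Ta\, b^Tb$, subject to $a^Ta + b^Tb = s_1^2 + s_2^2$ and $a^Ta\, b^Tb - (a^Tb)^2 = s_1^2 s_2^2$, equals $\frac{1}{2}(s_1^2 + s_2^2)(\tilde{s}_1^2 + \tilde{s}_2^2) - \frac{1}{2}(s_1^2 - s_2^2)(\tilde{s}_1^2 - \tilde{s}_2^2)$. -/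
open Matrix BigOperators

noncomputable def frobSq {m n : ℕ} (A : Matrix (Fin m) (Fin n) ℝ) : ℝ :=
  ∑ i, ∑ j, (A i j)^2

noncomputable def singVals {m n : ℕ} (A : Matrix (Fin m) (Fin n) ℝ) : Fin n → ℝ :=
  fun i => Real.sqrt ((Matrix.posSemidef_conjTranspose_mul_self A).isHermitian.eigenvalues i)

noncomputable def nuclearNorm {m n : ℕ} (A : Matrix (Fin m) (Fin n) ℝ) : ℝ :=
  ∑ i, singVals A i

noncomputable def relu : ℝ → ℝ := fun t => max t 0


set_option maxHeartbeats 1000000 in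
theorem stmt_5 (s1 s2 t1 t2 X Y Z : ℝ)
    (hs12 : s2 ≤ s1) (hs2 : 0 ≤ s2) (ht12 : t2 ≤ t1) (ht2 : 0 < t2)
    (hX : 0 ≤ X) (hY : 0 ≤ Y) (hCS : Z ^ 2 ≤ X * Y)
    (hsum : X + Y = t1 ^ 2 + t2 ^ 2) (hprod : X * Y - Z ^ 2 = t1 ^ 2 * t2 ^ 2) :
    IsLeast {v : ℝ | ∃ p q r : ℝ, 0 ≤ p ∧ 0 ≤ q ∧ r ^ 2 ≤ p * q ∧
        p + q = s1 ^ 2 + s2 ^ 2 ∧ p * q - r ^ 2 = s1 ^ 2 * s2 ^ 2 ∧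
        v = q * X - 2 * r * Z + p * Y}
      ((1 / 2) * (s1 ^ 2 + s2 ^ 2) * (t1 ^ 2 + t2 ^ 2)
        - (1 / 2) * (s1 ^ 2 - s2 ^ 2) * (t1 ^ 2 - t2 ^ 2)) := by
  have hs1 : 0 ≤ s1 := le_trans hs2 hs12
  have ha : s2 ^ 2 ≤ s1 ^ 2 := by nlinarith
  have hb : t2 ^ 2 ≤ t1 ^ 2 := by nlinarith
  constructor
  · -- membership
    rcases eq_or_lt_of_le hb with heq | hlt
    · -- degenerate: t1^2 = t2^2, then Z = 0, X = Y = t1^2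
      have hXY : (X - Y) ^ 2 + 4 * Z ^ 2 = 0 := by nlinarith
      have hZ0 : Z = 0 := by nlinarith [sq_nonneg (X - Y), sq_nonneg Z]
      have hXeq : X = Y := by nlinarith [sq_nonneg (X - Y), sq_nonneg Z]
      refine ⟨s1 ^ 2, s2 ^ 2, 0, by positivity, by positivity, by nlinarith, by ring,
        by ring, ?_⟩
      have hXv : X = t1 ^ 2 := by nlinarith
      rw [hXv, hXeq.symm, hXv]
      nlinarith [heq]
    · obtain ⟨k, hk, hk0⟩ : ∃ k : ℝ, k * (t1 ^ 2 - t2 ^ 2) = s1 ^ 2 - s2 ^ 2 ∧ 0 ≤ k :=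
        ⟨(s1 ^ 2 - s2 ^ 2) / (t1 ^ 2 - t2 ^ 2),
          div_mul_cancel₀ _ (by linarith : t1 ^ 2 - t2 ^ 2 ≠ 0),
          div_nonneg (by linarith) (by linarith)⟩
      have hYprod : (Y - t1 ^ 2) * (Y - t2 ^ 2) = -Z ^ 2 := by
        linear_combination Y * hsum - hprod
      have hXprod : (X - t1 ^ 2) * (X - t2 ^ 2) = -Z ^ 2 := by
        linear_combination X * hsum - hprod
      have hY1 : Y ≤ t1 ^ 2 := by nlinarith [sq_nonneg Z]
      have hY2 : t2 ^ 2 ≤ Y := by nlinarith [sq_nonneg Z]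
      have hX1 : X ≤ t1 ^ 2 := by nlinarith [sq_nonneg Z]
      have hX2 : t2 ^ 2 ≤ X := by nlinarith [sq_nonneg Z]
      refine ⟨s1 ^ 2 - k * (Y - t2 ^ 2), s1 ^ 2 - k * (X - t2 ^ 2), k * Z, ?_, ?_, ?_, ?_, ?_, ?_⟩
      · nlinarith [mul_le_mul_of_nonneg_left (show Y - t2 ^ 2 ≤ t1 ^ 2 - t2 ^ 2 by linarith) hk0, sq_nonneg s2]
      · nlinarith [mul_le_mul_of_nonneg_left (show X - t2 ^ 2 ≤ t1 ^ 2 - t2 ^ 2 by linarith) hk0, sq_nonneg s2]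
      · have hdet : (s1 ^ 2 - k * (Y - t2 ^ 2)) * (s1 ^ 2 - k * (X - t2 ^ 2)) - (k * Z) ^ 2
            = s1 ^ 2 * s2 ^ 2 := by
          linear_combination (-(s1 ^ 2 * k) - t2 ^ 2 * k ^ 2) * hsum + k ^ 2 * hprod
            + (-(s1 ^ 2)) * hk
        nlinarith [sq_nonneg (s1 * s2)]
      · linear_combination (-k) * hsum - hk
      · linear_combination (-(s1 ^ 2 * k) - t2 ^ 2 * k ^ 2) * hsum + k ^ 2 * hprod
          + (-(s1 ^ 2)) * hk
      · linear_combination (-(s1 ^ 2) - k * (X + Y) + k * t2 ^ 2 - k * (t1 ^ 2 + t2 ^ 2)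
            + 2 * k * (X + Y + t1 ^ 2)) * hsum + (2 * k - 4 * k) * hprod + t1 ^ 2 * hk
  · -- lower bound
    rintro v ⟨p, q, r, hp, hq, hr, hpq, hdet, hv⟩
    have h1 : (p - q) ^ 2 + 4 * r ^ 2 = (s1 ^ 2 - s2 ^ 2) ^ 2 := by
      linear_combination (p + q + s1 ^ 2 + s2 ^ 2) * hpq - 4 * hdet
    have h2 : (X - Y) ^ 2 + 4 * Z ^ 2 = (t1 ^ 2 - t2 ^ 2) ^ 2 := by
      linear_combination (X + Y + t1 ^ 2 + t2 ^ 2) * hsum - 4 * hprod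
    have hab : 0 ≤ (s1 ^ 2 - s2 ^ 2) * (t1 ^ 2 - t2 ^ 2) :=
      mul_nonneg (by linarith) (by linarith)
    have key : (p - q) * (X - Y) + 4 * r * Z ≤ (s1 ^ 2 - s2 ^ 2) * (t1 ^ 2 - t2 ^ 2) := by
      nlinarith [sq_nonneg ((p - q) * (2 * Z) - (2 * r) * (X - Y)), h1, h2, hab,
        sq_nonneg ((s1 ^ 2 - s2 ^ 2) * (t1 ^ 2 - t2 ^ 2) - ((p - q) * (X - Y) + 4 * r * Z)),
        sq_nonneg ((s1 ^ 2 - s2 ^ 2) * (t1 ^ 2 - t2 ^ 2) + ((p - q) * (X - Y) + 4 * r * Z))]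
    have h3 : (p + q) * (X + Y) = (s1 ^ 2 + s2 ^ 2) * (t1 ^ 2 + t2 ^ 2) := by
      rw [hpq, hsum]
    have hlin : 2 * (q * X - 2 * r * Z + p * Y)
        = (s1 ^ 2 + s2 ^ 2) * (t1 ^ 2 + t2 ^ 2) - ((p - q) * (X - Y) + 4 * r * Z) := by
      linear_combination h3
    rw [hv]; linarith
end

section
/- Let $C \in \mathbb{R}^{m\times n}$ and $\lambda_A, \lambda_B > 0$. Then $\min \{\frac{\lambda_A}{2}\|A\|_F^2 + \frac{\lambda_B}{2}\|B\|_F^2 : A \in \mathbb{R}^{m\times k},\ B \in \mathbb{R}^{k\times n},\ AB = C\} = \sqrt{\lambda_A \lambda_B}\, \|C\|_*$, provided $k \ge \mathrm{rank}(C)$, where $\|C\|_*$ denotes the nuclear norm (sum of singular values) of $C$. -/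
open Matrix BigOperators

/-!
Take the spectral decomposition `CᵀC = V diag(σ²) Vᵀ` and `U = C V diag(σ)⁻¹`, so that `UUᵀ` is an
orthogonal projection and `tr (Uᵀ C V) = ‖C‖_*`. If `C = A B`, then by Cauchy–Schwarz
`‖C‖_* = tr ((AᵀU)ᵀ (B V)) ≤ ‖AᵀU‖_F ‖B V‖_F ≤ ‖A‖_F ‖B‖_F`, and AM–GM turns this into
`√(λ_A λ_B) ‖C‖_* ≤ λ_A/2 ‖A‖_F² + λ_B/2 ‖B‖_F²`. Equality holds for `A = γ U Σ^{1/2}` and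
`B = γ⁻¹ Σ^{1/2} Vᵀ` with `γ⁴ = λ_B/λ_A`; only `rank C` columns of `U Σ^{1/2}` are nonzero, so this
factorization can be compressed to inner dimension `k`.
-/

section Frobenius

variable {m n p : ℕ}

lemma frobSq_eq_trace_transpose_mul (A : Matrix (Fin m) (Fin n) ℝ) :
    frobSq A = (Aᵀ * A).trace := by
  simp only [frobSq, trace, diag, mul_apply, transpose_apply, sq]
  exact Finset.sum_comm

lemma frobSq_eq_trace_mul_transpose (A : Matrix (Fin m) (Fin n) ℝ) :
    frobSq A = (A * Aᵀ).trace := by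
  simp only [frobSq, trace, diag, mul_apply, transpose_apply, sq]

lemma frobSq_nonneg (A : Matrix (Fin m) (Fin n) ℝ) : 0 ≤ frobSq A := by
  unfold frobSq; positivity

lemma frobSq_smul (c : ℝ) (A : Matrix (Fin m) (Fin n) ℝ) :
    frobSq (c • A) = c ^ 2 * frobSq A := by
  simp only [frobSq, Matrix.smul_apply, smul_eq_mul, mul_pow, Finset.mul_sum]

lemma trace_transpose_mul_le (X Y : Matrix (Fin m) (Fin n) ℝ) :
    (Xᵀ * Y).trace ≤ √(frobSq X) * √(frobSq Y) := by
  simp only [frobSq, ← Fintype.sum_prod_type']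
  calc (Xᵀ * Y).trace = ∑ ij : Fin m × Fin n, X ij.1 ij.2 * Y ij.1 ij.2 := by
        simp only [trace, diag, mul_apply, transpose_apply, Fintype.sum_prod_type]
        exact Finset.sum_comm
    _ ≤ _ := Real.sum_mul_le_sqrt_mul_sqrt _ _ _

lemma frobSq_mul_of_mul_transpose_eq_one (B : Matrix (Fin m) (Fin n) ℝ)
    {V : Matrix (Fin n) (Fin n) ℝ} (hV : V * Vᵀ = 1) : frobSq (B * V) = frobSq B := by
  rw [frobSq_eq_trace_mul_transpose, frobSq_eq_trace_mul_transpose, transpose_mul,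
    Matrix.mul_assoc, ← Matrix.mul_assoc V, hV, Matrix.one_mul]

lemma trace_mul_le_trace_of_isIdempotentElem {ι : Type*} [Fintype ι] [DecidableEq ι]
    {X P : Matrix ι ι ℝ} (hX : X.PosSemidef) (hPt : Pᵀ = P) (hP : IsIdempotentElem P) :
    (X * P).trace ≤ X.trace := by
  set Q := 1 - P
  have hQ : Q * Q = Q := hP.one_sub.eq
  have hQt : Qᵀ = Q := by simp [Q, hPt]
  -- `tr (X (1 - P)) = tr ((1 - P) X (1 - P))`, the trace of a positive semidefinite matrix
  have hXQ : 0 ≤ (X * Q).trace := by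
    have := (hX.mul_mul_conjTranspose_same Q).trace_nonneg
    rwa [conjTranspose_eq_transpose_of_trivial, hQt, Matrix.mul_assoc, trace_mul_comm,
      Matrix.mul_assoc, hQ] at this
  simpa [Q, Matrix.mul_sub, trace_sub] using hXQ

lemma frobSq_transpose_mul_le (A : Matrix (Fin m) (Fin p) ℝ) {U : Matrix (Fin m) (Fin n) ℝ}
    (hU : U * (Uᵀ * U) = U) : frobSq (Aᵀ * U) ≤ frobSq A := by
  have hP : IsIdempotentElem (U * Uᵀ) := by
    rw [IsIdempotentElem, Matrix.mul_assoc, ← Matrix.mul_assoc Uᵀ, ← Matrix.mul_assoc, hU]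
  have hX : (A * Aᵀ).PosSemidef := by
    simpa only [conjTranspose_eq_transpose_of_trivial] using posSemidef_self_mul_conjTranspose A
  calc frobSq (Aᵀ * U) = (A * Aᵀ * (U * Uᵀ)).trace := by
        rw [frobSq_eq_trace_mul_transpose, transpose_mul, transpose_transpose, Matrix.mul_assoc,
          ← Matrix.mul_assoc U, trace_mul_comm, Matrix.mul_assoc, trace_mul_comm]
    _ ≤ (A * Aᵀ).trace :=
        trace_mul_le_trace_of_isIdempotentElem hX (by simp [transpose_mul]) hP
    _ = frobSq A := (frobSq_eq_trace_mul_transpose A).symm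

end Frobenius

lemma mul_diagonal_eq_self_of_transpose_mul_self_eq_diagonal {ι κ : Type*} [Fintype ι]
    [Fintype κ] [DecidableEq κ] {X : Matrix ι κ ℝ} {d f : κ → ℝ}
    (hX : Xᵀ * X = diagonal d) (hf : ∀ i, d i ≠ 0 → f i = 1) : X * diagonal f = X := by
  have hzero : (X * diagonal fun i => 1 - f i)ᵀ * (X * diagonal fun i => 1 - f i) = 0 := by
    rw [transpose_mul, diagonal_transpose, Matrix.mul_assoc, ← Matrix.mul_assoc Xᵀ, hX,
      diagonal_mul_diagonal, diagonal_mul_diagonal, diagonal_eq_zero]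
    funext i
    by_cases hd : d i = 0
    · simp [hd]
    · simp [hf i hd]
  rw [← conjTranspose_eq_transpose_of_trivial, conjTranspose_mul_self_eq_zero,
    ← diagonal_sub, diagonal_one, Matrix.mul_sub, Matrix.mul_one, sub_eq_zero] at hzero
  exact hzero.symm

lemma exists_mul_transpose_eq_diagonal_indicator {ι : Type*} [Fintype ι] [DecidableEq ι]
    (s : Finset ι) {k : ℕ} (hs : s.card ≤ k) :
    ∃ N : Matrix ι (Fin k) ℝ, N * Nᵀ = diagonal fun i => if i ∈ s then (1 : ℝ) else 0 := by
  let g : s ↪ Fin k := s.equivFin.toEmbedding.trans (Fin.castLEEmb hs)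
  refine ⟨Matrix.of fun i q => if h : i ∈ s then if g ⟨i, h⟩ = q then 1 else 0 else 0, ?_⟩
  ext i j
  by_cases hi : i ∈ s
  · by_cases hj : j ∈ s
    · simp [mul_apply, diagonal_apply, hi, hj, g.injective.eq_iff, Subtype.ext_iff]
    · simp [mul_apply, hi, hj, ne_of_mem_of_not_mem hi hj]
  · simp [mul_apply, diagonal_apply, hi]

lemma exists_factorization_of_card_support_le {m n p k : ℕ} {A : Matrix (Fin m) (Fin p) ℝ}
    {B : Matrix (Fin p) (Fin n) ℝ} (s : Finset (Fin p)) (hs : s.card ≤ k)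
    (hA : A * diagonal (fun i => if i ∈ s then (1 : ℝ) else 0) = A)
    (hB : diagonal (fun i => if i ∈ s then (1 : ℝ) else 0) * B = B) :
    ∃ (A' : Matrix (Fin m) (Fin k) ℝ) (B' : Matrix (Fin k) (Fin n) ℝ),
      A' * B' = A * B ∧ frobSq A' = frobSq A ∧ frobSq B' = frobSq B := by
  obtain ⟨N, hN⟩ := exists_mul_transpose_eq_diagonal_indicator s hs
  refine ⟨A * N, Nᵀ * B, ?_, ?_, ?_⟩
  · rw [Matrix.mul_assoc, ← Matrix.mul_assoc N, hN, hB]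
  · rw [frobSq_eq_trace_mul_transpose, frobSq_eq_trace_mul_transpose, transpose_mul,
      Matrix.mul_assoc, ← Matrix.mul_assoc N, hN, ← Matrix.mul_assoc, hA]
  · rw [frobSq_eq_trace_transpose_mul, frobSq_eq_trace_transpose_mul, transpose_mul,
      transpose_transpose, Matrix.mul_assoc, ← Matrix.mul_assoc N, hN, hB]

section SingularValues

variable {m n : ℕ} (C : Matrix (Fin m) (Fin n) ℝ)

lemma singVals_nonneg (i : Fin n) : 0 ≤ singVals C i := Real.sqrt_nonneg _

lemma sq_singVals (i : Fin n) :
    singVals C i ^ 2 = (posSemidef_conjTranspose_mul_self C).isHermitian.eigenvalues i :=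
  Real.sq_sqrt ((posSemidef_conjTranspose_mul_self C).eigenvalues_nonneg i)

/-- An orthogonal matrix whose columns are right singular vectors of `C`. -/
noncomputable def rightSingularMatrix : Matrix (Fin n) (Fin n) ℝ :=
  (posSemidef_conjTranspose_mul_self C).isHermitian.eigenvectorUnitary

lemma rightSingularMatrix_transpose_mul_self :
    (rightSingularMatrix C)ᵀ * rightSingularMatrix C = 1 := by
  rw [← conjTranspose_eq_transpose_of_trivial, ← star_eq_conjTranspose]
  exact Matrix.UnitaryGroup.star_mul_self _

lemma rightSingularMatrix_mul_transpose_self :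
    rightSingularMatrix C * (rightSingularMatrix C)ᵀ = 1 := by
  rw [← conjTranspose_eq_transpose_of_trivial, ← star_eq_conjTranspose]
  exact Unitary.coe_mul_star_self _

lemma transpose_mul_self_mul_rightSingularMatrix :
    (C * rightSingularMatrix C)ᵀ * (C * rightSingularMatrix C) =
      diagonal fun i => singVals C i ^ 2 := by
  have hPSD := posSemidef_conjTranspose_mul_self C
  have := hPSD.isHermitian.conjStarAlgAut_star_eigenvectorUnitary
  rw [Unitary.conjStarAlgAut_star_apply] at this
  convert this using 1
  · simp [rightSingularMatrix, transpose_mul, Matrix.mul_assoc, star_eq_conjTranspose]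
  · simp [sq_singVals]

lemma rank_eq_card_singVals_ne_zero :
    C.rank = (Finset.univ.filter fun i => singVals C i ≠ 0).card := by
  have hPSD := posSemidef_conjTranspose_mul_self C
  rw [← rank_conjTranspose_mul_self, hPSD.isHermitian.rank_eq_card_non_zero_eigs,
    Fintype.card_subtype]
  congr 1
  ext i
  simp only [Finset.mem_filter, Finset.mem_univ, true_and, ← sq_singVals, ne_eq,
    pow_eq_zero_iff two_ne_zero]

/-- The columns are the left singular vectors of `C` for the nonzero singular values, and zero
for the others (as `0⁻¹ = 0`). -/
noncomputable def leftSingularMatrix : Matrix (Fin m) (Fin n) ℝ :=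
  C * rightSingularMatrix C * diagonal (singVals C)⁻¹

lemma transpose_leftSingularMatrix_mul (X : Matrix (Fin m) (Fin n) ℝ) :
    (leftSingularMatrix C)ᵀ * X = diagonal (singVals C)⁻¹ * (C * rightSingularMatrix C)ᵀ * X := by
  rw [leftSingularMatrix, transpose_mul, diagonal_transpose]

lemma leftSingularMatrix_mul_transpose_mul_self :
    leftSingularMatrix C * ((leftSingularMatrix C)ᵀ * leftSingularMatrix C) =
      leftSingularMatrix C := by
  set W := C * rightSingularMatrix C
  set D := diagonal (singVals C)⁻¹
  have hσ : D * D * diagonal (fun i => singVals C i ^ 2) * D = D := by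
    simp only [D, diagonal_mul_diagonal]
    congr 1
    funext i
    rcases eq_or_ne (singVals C i) 0 with h | h
    · simp [h]
    · simp only [Pi.inv_apply]
      field_simp
  rw [transpose_leftSingularMatrix_mul]
  change W * D * (D * Wᵀ * (W * D)) = W * D
  calc W * D * (D * Wᵀ * (W * D)) = W * (D * D * (Wᵀ * W) * D) := by
        simp only [Matrix.mul_assoc]
    _ = W * D := by rw [transpose_mul_self_mul_rightSingularMatrix, hσ]

lemma trace_leftSingularMatrix_transpose_mul_mul_rightSingularMatrix :
    ((leftSingularMatrix C)ᵀ * C * rightSingularMatrix C).trace = nuclearNorm C := by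
  rw [transpose_leftSingularMatrix_mul, Matrix.mul_assoc, Matrix.mul_assoc,
    transpose_mul_self_mul_rightSingularMatrix, diagonal_mul_diagonal, trace_diagonal, nuclearNorm]
  refine Finset.sum_congr rfl fun i _ => ?_
  rcases eq_or_ne (singVals C i) 0 with h | h
  · simp [h]
  · simp only [Pi.inv_apply]
    field_simp

end SingularValues

lemma nuclearNorm_mul_le {m n k : ℕ} (A : Matrix (Fin m) (Fin k) ℝ)
    (B : Matrix (Fin k) (Fin n) ℝ) : nuclearNorm (A * B) ≤ √(frobSq A) * √(frobSq B) := by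
  calc nuclearNorm (A * B)
      = ((Aᵀ * leftSingularMatrix (A * B))ᵀ * (B * rightSingularMatrix (A * B))).trace := by
        rw [← trace_leftSingularMatrix_transpose_mul_mul_rightSingularMatrix, transpose_mul,
          transpose_transpose]
        simp only [Matrix.mul_assoc]
    _ ≤ √(frobSq (Aᵀ * leftSingularMatrix (A * B))) *
          √(frobSq (B * rightSingularMatrix (A * B))) := trace_transpose_mul_le _ _
    _ ≤ √(frobSq A) * √(frobSq B) := by
        rw [frobSq_mul_of_mul_transpose_eq_one B (rightSingularMatrix_mul_transpose_self _)]
        gcongr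
        exact frobSq_transpose_mul_le A (leftSingularMatrix_mul_transpose_mul_self _)

section NuclearFactors

variable {m n : ℕ} (C : Matrix (Fin m) (Fin n) ℝ)

/-- The factor `U Σ^{1/2}` of the optimal factorization `C = (U Σ^{1/2}) (Σ^{1/2} Vᵀ)`. -/
noncomputable def nuclearFactorLeft : Matrix (Fin m) (Fin n) ℝ :=
  C * rightSingularMatrix C * diagonal fun i => (√(singVals C i))⁻¹

noncomputable def nuclearFactorRight : Matrix (Fin n) (Fin n) ℝ :=
  diagonal (fun i => √(singVals C i)) * (rightSingularMatrix C)ᵀ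

lemma nuclearFactorLeft_mul_nuclearFactorRight :
    nuclearFactorLeft C * nuclearFactorRight C = C := by
  have hW := mul_diagonal_eq_self_of_transpose_mul_self_eq_diagonal
    (transpose_mul_self_mul_rightSingularMatrix C)
    (f := fun i => (√(singVals C i))⁻¹ * √(singVals C i)) fun i hi => by
      have : √(singVals C i) ≠ 0 := by
        simpa [Real.sqrt_eq_zero (singVals_nonneg C i)] using hi
      exact inv_mul_cancel₀ this
  rw [nuclearFactorLeft, nuclearFactorRight, Matrix.mul_assoc, ← Matrix.mul_assoc (diagonal _),
    diagonal_mul_diagonal, ← Matrix.mul_assoc, hW, Matrix.mul_assoc,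
    rightSingularMatrix_mul_transpose_self, Matrix.mul_one]

lemma frobSq_nuclearFactorLeft : frobSq (nuclearFactorLeft C) = nuclearNorm C := by
  rw [frobSq_eq_trace_transpose_mul, nuclearFactorLeft, transpose_mul, diagonal_transpose,
    Matrix.mul_assoc, ← Matrix.mul_assoc (C * _)ᵀ, transpose_mul_self_mul_rightSingularMatrix,
    diagonal_mul_diagonal, diagonal_mul_diagonal, trace_diagonal, nuclearNorm]
  refine Finset.sum_congr rfl fun i _ => ?_
  have hσ := singVals_nonneg C i
  rcases hσ.eq_or_lt with h | h
  · simp [← h]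
  · have : 0 < √(singVals C i) := Real.sqrt_pos.2 h
    field_simp
    rw [Real.sq_sqrt hσ]

lemma frobSq_nuclearFactorRight : frobSq (nuclearFactorRight C) = nuclearNorm C := by
  rw [frobSq_eq_trace_mul_transpose, nuclearFactorRight, transpose_mul, transpose_transpose,
    diagonal_transpose, Matrix.mul_assoc, ← Matrix.mul_assoc (rightSingularMatrix C)ᵀ,
    rightSingularMatrix_transpose_mul_self, Matrix.one_mul, diagonal_mul_diagonal,
    trace_diagonal, nuclearNorm]
  exact Finset.sum_congr rfl fun i _ => Real.mul_self_sqrt (singVals_nonneg C i)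

lemma exists_factorization_frobSq_eq_nuclearNorm {k : ℕ} (hk : C.rank ≤ k) :
    ∃ (A : Matrix (Fin m) (Fin k) ℝ) (B : Matrix (Fin k) (Fin n) ℝ),
      A * B = C ∧ frobSq A = nuclearNorm C ∧ frobSq B = nuclearNorm C := by
  set s := Finset.univ.filter fun i => singVals C i ≠ 0
  have hsqrt (i : Fin n) : √(singVals C i) = 0 ↔ i ∉ s := by
    simp [s, Real.sqrt_eq_zero (singVals_nonneg C i)]
  have hA : nuclearFactorLeft C * diagonal (fun i => if i ∈ s then (1 : ℝ) else 0) =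
      nuclearFactorLeft C := by
    rw [nuclearFactorLeft, Matrix.mul_assoc, diagonal_mul_diagonal]
    congr 2
    funext i
    by_cases hi : i ∈ s <;> simp [hi, (hsqrt i).2]
  have hB : diagonal (fun i => if i ∈ s then (1 : ℝ) else 0) * nuclearFactorRight C =
      nuclearFactorRight C := by
    rw [nuclearFactorRight, ← Matrix.mul_assoc, diagonal_mul_diagonal]
    congr 2
    funext i
    by_cases hi : i ∈ s <;> simp [hi, (hsqrt i).2]
  obtain ⟨A, B, hAB, hfA, hfB⟩ :=
    exists_factorization_of_card_support_le s (rank_eq_card_singVals_ne_zero C ▸ hk) hA hB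
  exact ⟨A, B, hAB.trans (nuclearFactorLeft_mul_nuclearFactorRight C),
    hfA.trans (frobSq_nuclearFactorLeft C), hfB.trans (frobSq_nuclearFactorRight C)⟩

end NuclearFactors

lemma sqrt_mul_mul_mul_le_half_mul_sq_add {a b : ℝ} (ha : 0 ≤ a) (hb : 0 ≤ b) (x y : ℝ) :
    √(a * b) * (x * y) ≤ a / 2 * x ^ 2 + b / 2 * y ^ 2 := by
  rw [Real.sqrt_mul ha]
  nlinarith [sq_nonneg (√a * x - √b * y), Real.sq_sqrt ha, Real.sq_sqrt hb]

lemma exists_half_mul_sq_add_half_mul_inv_sq_eq_sqrt_mul {a b : ℝ} (ha : 0 < a) (hb : 0 < b) :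
    ∃ c : ℝ, c ≠ 0 ∧ a / 2 * c ^ 2 + b / 2 * c⁻¹ ^ 2 = √(a * b) := by
  obtain ⟨x, hx, rfl⟩ : ∃ x, 0 < x ∧ x ^ 2 = a := ⟨√a, Real.sqrt_pos.2 ha, Real.sq_sqrt ha.le⟩
  obtain ⟨y, hy, rfl⟩ : ∃ y, 0 < y ∧ y ^ 2 = b := ⟨√b, Real.sqrt_pos.2 hb, Real.sq_sqrt hb.le⟩
  refine ⟨√(y / x), (Real.sqrt_pos.2 (div_pos hy hx)).ne', ?_⟩
  rw [inv_pow, Real.sq_sqrt (div_pos hy hx).le, ← mul_pow, Real.sqrt_sq (by positivity)]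
  field_simp
  ring

theorem stmt_7 {m n : ℕ} (C : Matrix (Fin m) (Fin n) ℝ)
    (lA lB : ℝ) (hA : 0 < lA) (hB : 0 < lB) (k : ℕ) (hk : C.rank ≤ k) :
    IsLeast {v : ℝ | ∃ (A : Matrix (Fin m) (Fin k) ℝ) (B : Matrix (Fin k) (Fin n) ℝ),
        A * B = C ∧ v = lA / 2 * frobSq A + lB / 2 * frobSq B}
      (Real.sqrt (lA * lB) * nuclearNorm C) := by
  refine ⟨?_, ?_⟩
  · obtain ⟨A, B, hAB, hfA, hfB⟩ := exists_factorization_frobSq_eq_nuclearNorm C hk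
    obtain ⟨c, hc, hbalance⟩ := exists_half_mul_sq_add_half_mul_inv_sq_eq_sqrt_mul hA hB
    refine ⟨c • A, c⁻¹ • B, ?_, ?_⟩
    · rw [Matrix.smul_mul, Matrix.mul_smul, smul_smul, mul_inv_cancel₀ hc, one_smul, hAB]
    · rw [frobSq_smul, frobSq_smul, hfA, hfB, ← hbalance]
      ring
  · rintro _ ⟨A, B, rfl, rfl⟩
    calc √(lA * lB) * nuclearNorm (A * B) ≤ √(lA * lB) * (√(frobSq A) * √(frobSq B)) := by
          gcongr
          exact nuclearNorm_mul_le A B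
      _ ≤ lA / 2 * √(frobSq A) ^ 2 + lB / 2 * √(frobSq B) ^ 2 :=
          sqrt_mul_mul_mul_le_half_mul_sq_add hA.le hB.le _ _
      _ = lA / 2 * frobSq A + lB / 2 * frobSq B := by
          rw [Real.sq_sqrt (frobSq_nonneg A), Real.sq_sqrt (frobSq_nonneg B)]
end

section
/- For any matrix $H \in \mathbb{R}^{d\times 2}$ (i.e., with two columns), $\|\sigma(H)\|_* \le \|H\|_*$, where $\sigma$ is the entrywise ReLU and $\|\cdot\|_*$ is the nuclear norm. -/
open Matrix BigOperators

/-!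
If a two-column matrix has Gram matrix `!![p, m; m, q]`, its singular values satisfy
`(σ₁ + σ₂)² = p + q + 2 √(p q - m²)`, so the theorem becomes an inequality between the Gram data
of the columns `a, b` and of `a⁺, b⁺`.

Rows with both entries negative are zero rows of the ReLU image, and deleting rows can only
decrease `(σ₁ + σ₂)²`, since `det (G + G') ≥ det G` for positive semidefinite `2 × 2` matrices.
On the remaining rows `a⁻` and `b⁻` have disjoint supports, so passing from `(a⁺, b⁺)` to
`(a, b) = (a⁺ - a⁻, b⁺ - b⁻)` adds `‖a⁻‖²` and `‖b⁻‖²` to the diagonal of the Gram matrix and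
subtracts `⟨a⁻, b⁺⟩ + ⟨a⁺, b⁻⟩ ≥ 0` off the diagonal. Together with the Cauchy–Schwarz bounds on
these inner products, this forces `(σ₁ + σ₂)²` up.
-/

noncomputable def nuclearSqOfGram (p q m : ℝ) : ℝ := p + q + 2 * √(p * q - m ^ 2)

noncomputable def nuclearSqOfCols {ι : Type*} (s : Finset ι) (a b : ι → ℝ) : ℝ :=
  nuclearSqOfGram (∑ i ∈ s, a i ^ 2) (∑ i ∈ s, b i ^ 2) (∑ i ∈ s, a i * b i)

lemma sqrt_add_sqrt_eq {x y : ℝ} (hx : 0 ≤ x) (hy : 0 ≤ y) :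
    √x + √y = √(x + y + 2 * √(x * y)) := by
  rw [Real.sqrt_mul hx, eq_comm, Real.sqrt_eq_iff_eq_sq (by positivity) (by positivity), add_sq,
    Real.sq_sqrt hx, Real.sq_sqrt hy]
  ring

lemma nuclearNorm_eq_sqrt_trace_add_sqrt_det {m : ℕ} (A : Matrix (Fin m) (Fin 2) ℝ) :
    nuclearNorm A = √((Aᴴ * A).trace + 2 * √(Aᴴ * A).det) := by
  have hA := posSemidef_conjTranspose_mul_self A
  rw [hA.isHermitian.trace_eq_sum_eigenvalues, hA.isHermitian.det_eq_prod_eigenvalues]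
  simp only [nuclearNorm, singVals, Fin.sum_univ_two, Fin.prod_univ_two, RCLike.ofReal_real_eq_id,
    id]
  exact sqrt_add_sqrt_eq (hA.eigenvalues_nonneg 0) (hA.eigenvalues_nonneg 1)

lemma nuclearNorm_eq_sqrt_nuclearSqOfCols {m : ℕ} (A : Matrix (Fin m) (Fin 2) ℝ) :
    nuclearNorm A = √(nuclearSqOfCols Finset.univ (fun i => A i 0) (fun i => A i 1)) := by
  have hG : ∀ j k, (Aᴴ * A) j k = ∑ i, A i j * A i k := fun j k => by
    simp [Matrix.mul_apply]
  rw [nuclearNorm_eq_sqrt_trace_add_sqrt_det, trace_fin_two, det_fin_two, hG, hG, hG, hG,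
    nuclearSqOfCols, nuclearSqOfGram]
  simp only [← sq, mul_comm (A _ 1) (A _ 0)]

lemma two_mul_mul_le_of_sq_le_mul {m m' p q p' q' : ℝ} (hp : 0 ≤ p) (hq : 0 ≤ q) (hp' : 0 ≤ p')
    (hq' : 0 ≤ q') (hm : m ^ 2 ≤ p * q) (hm' : m' ^ 2 ≤ p' * q') :
    2 * (m * m') ≤ p * q' + p' * q := by
  have h : (m * m') ^ 2 ≤ (p * q') * (p' * q) := by
    rw [mul_pow]; nlinarith [mul_le_mul hm hm' (sq_nonneg _) (mul_nonneg hp hq)]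
  nlinarith [sq_nonneg (p * q' - p' * q), mul_nonneg hp hq', mul_nonneg hp' hq]

lemma nuclearSqOfGram_le_add {p q m p' q' m' : ℝ} (hp : 0 ≤ p) (hq : 0 ≤ q) (hp' : 0 ≤ p')
    (hq' : 0 ≤ q') (hm : m ^ 2 ≤ p * q) (hm' : m' ^ 2 ≤ p' * q') :
    nuclearSqOfGram p q m ≤ nuclearSqOfGram (p + p') (q + q') (m + m') := by
  have hcross := two_mul_mul_le_of_sq_le_mul hp hq hp' hq' hm hm'
  unfold nuclearSqOfGram
  gcongr ?_ + 2 * √?_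
  · linarith
  · nlinarith

lemma sq_sub_half_le_gram_det {a b c e m S w : ℝ} (ha : 0 ≤ a) (hb : 0 ≤ b) (hc : 0 ≤ c)
    (he : 0 ≤ e) (hm : 0 ≤ m) (hS : 0 ≤ S) (hw : 0 ≤ w) (hwW : w ≤ a * e + b * c)
    (hcemS : c ^ 2 * e ^ 2 = m ^ 2 + S ^ 2) (habS : a ^ 2 + b ^ 2 < 2 * S) :
    (S - (a ^ 2 + b ^ 2) / 2) ^ 2 ≤ (c ^ 2 + a ^ 2) * (e ^ 2 + b ^ 2) - (m - w) ^ 2 := by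
  have hce : c * e ≤ m + S := by nlinarith [mul_nonneg hm hS, mul_nonneg hc he]
  have hab : a * b ≤ c * e := by nlinarith [sq_nonneg (a - b), mul_nonneg hc he, sq_nonneg m]
  have hW : 2 * (a * b) ≤ a * e + b * c := by
    nlinarith [sq_nonneg (a * e - b * c), mul_nonneg (mul_nonneg ha hb) (sub_nonneg.mpr hab)]
  -- `w ↦ w (2m - w)` is concave, so on `[0, ae + bc]` it is bounded below by its endpoint values
  rcases le_total w (2 * m) with hw2m | hw2m
  · nlinarith [mul_nonneg hw (sub_nonneg.mpr hw2m), mul_nonneg hc hb, mul_nonneg ha he,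
      mul_nonneg ha hb]
  · nlinarith [mul_le_mul_of_nonneg_left hce (mul_nonneg ha hb), mul_le_mul_of_nonneg_left hW hm,
      sq_nonneg (a - b), mul_nonneg hm (mul_nonneg ha hb)]

lemma nuclearSqOfGram_le_of_negParts {P Q m x y u v : ℝ} (hP : 0 ≤ P) (hQ : 0 ≤ Q) (hm : 0 ≤ m)
    (hx : 0 ≤ x) (hy : 0 ≤ y) (hu : 0 ≤ u) (hv : 0 ≤ v) (hmPQ : m ^ 2 ≤ P * Q)
    (huxQ : u ^ 2 ≤ x * Q) (hvyP : v ^ 2 ≤ y * P) :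
    nuclearSqOfGram P Q m ≤ nuclearSqOfGram (P + x) (Q + y) (m - u - v) := by
  unfold nuclearSqOfGram
  set S := √(P * Q - m ^ 2)
  have hS0 : 0 ≤ S := Real.sqrt_nonneg _
  have hS2 : S ^ 2 = P * Q - m ^ 2 := Real.sq_sqrt (by linarith)
  suffices 2 * S ≤ x + y + 2 * √((P + x) * (Q + y) - (m - u - v) ^ 2) by linarith
  rcases le_or_gt (2 * S) (x + y) with hxyS | hxyS
  · linarith [Real.sqrt_nonneg ((P + x) * (Q + y) - (m - u - v) ^ 2)]
  have hu' : u ≤ √x * √Q := by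
    rw [← Real.sqrt_mul hx]; exact Real.le_sqrt_of_sq_le huxQ
  have hv' : v ≤ √y * √P := by
    rw [← Real.sqrt_mul hy]; exact Real.le_sqrt_of_sq_le hvyP
  have hdet := sq_sub_half_le_gram_det (Real.sqrt_nonneg x) (Real.sqrt_nonneg y)
    (Real.sqrt_nonneg P) (Real.sqrt_nonneg Q) hm hS0 (add_nonneg hu hv)
    (add_le_add hu' hv') (by rw [Real.sq_sqrt hP, Real.sq_sqrt hQ]; linarith)
    (by rwa [Real.sq_sqrt hx, Real.sq_sqrt hy])
  simp only [Real.sq_sqrt hx, Real.sq_sqrt hy, Real.sq_sqrt hP, Real.sq_sqrt hQ] at hdet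
  have := Real.le_sqrt_of_sq_le
    (show (S - (x + y) / 2) ^ 2 ≤ (P + x) * (Q + y) - (m - u - v) ^ 2 by linarith)
  linarith

lemma mul_eq_posPart_mul_posPart_sub {s t : ℝ} (h : 0 ≤ s ∨ 0 ≤ t) :
    s * t = s⁺ * t⁺ - s⁻ * t⁺ - s⁺ * t⁻ := by
  rcases h with h | h
  · rw [posPart_eq_self.mpr h, negPart_eq_zero.mpr h]
    linear_combination -s * posPart_sub_negPart t
  · rw [posPart_eq_self.mpr h, negPart_eq_zero.mpr h]
    linear_combination -t * posPart_sub_negPart s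

lemma sq_eq_posPart_sq_add_negPart_sq (t : ℝ) : t ^ 2 = t⁺ ^ 2 + t⁻ ^ 2 := by
  rcases le_total 0 t with h | h
  · simp [posPart_eq_self.mpr h, negPart_eq_zero.mpr h]
  · simp [posPart_eq_zero.mpr h, negPart_eq_neg.mpr h]

section Cols

variable {ι : Type*} {s t : Finset ι} {a b : ι → ℝ}

lemma nuclearSqOfCols_mono [DecidableEq ι] (hst : s ⊆ t) :
    nuclearSqOfCols s a b ≤ nuclearSqOfCols t a b := by
  unfold nuclearSqOfCols
  have hsplit (f : ι → ℝ) : ∑ i ∈ t, f i = ∑ i ∈ s, f i + ∑ i ∈ t \ s, f i := by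
    rw [add_comm, Finset.sum_sdiff hst]
  rw [hsplit, hsplit, hsplit]
  exact nuclearSqOfGram_le_add (by positivity) (by positivity) (by positivity) (by positivity)
    (Finset.sum_mul_sq_le_sq_mul_sq _ _ _) (Finset.sum_mul_sq_le_sq_mul_sq _ _ _)

lemma nuclearSqOfCols_posPart_le_of_forall (h : ∀ i ∈ s, 0 ≤ a i ∨ 0 ≤ b i) :
    nuclearSqOfCols s (fun i => (a i)⁺) (fun i => (b i)⁺) ≤ nuclearSqOfCols s a b := by
  have hsq (c : ι → ℝ) : ∑ i ∈ s, c i ^ 2 = ∑ i ∈ s, (c i)⁺ ^ 2 + ∑ i ∈ s, (c i)⁻ ^ 2 := by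
    rw [← Finset.sum_add_distrib]
    exact Finset.sum_congr rfl fun i _ => sq_eq_posPart_sq_add_negPart_sq _
  have hmul : ∑ i ∈ s, a i * b i = ∑ i ∈ s, (a i)⁺ * (b i)⁺ - ∑ i ∈ s, (a i)⁻ * (b i)⁺
      - ∑ i ∈ s, (a i)⁺ * (b i)⁻ := by
    rw [← Finset.sum_sub_distrib, ← Finset.sum_sub_distrib]
    exact Finset.sum_congr rfl fun i hi => mul_eq_posPart_mul_posPart_sub (h i hi)
  unfold nuclearSqOfCols
  rw [hsq a, hsq b, hmul]
  exact nuclearSqOfGram_le_of_negParts (by positivity) (by positivity)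
    (Finset.sum_nonneg fun i _ => by positivity) (by positivity) (by positivity)
    (Finset.sum_nonneg fun i _ => by positivity) (Finset.sum_nonneg fun i _ => by positivity)
    (Finset.sum_mul_sq_le_sq_mul_sq _ _ _) (Finset.sum_mul_sq_le_sq_mul_sq _ _ _)
    (by rw [mul_comm]; exact Finset.sum_mul_sq_le_sq_mul_sq _ _ _)

lemma nuclearSqOfCols_posPart_le :
    nuclearSqOfCols s (fun i => (a i)⁺) (fun i => (b i)⁺) ≤ nuclearSqOfCols s a b := by
  classical
  set K := {i ∈ s | 0 ≤ a i ∨ 0 ≤ b i}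
  have hK : nuclearSqOfCols K (fun i => (a i)⁺) (fun i => (b i)⁺)
      = nuclearSqOfCols s (fun i => (a i)⁺) (fun i => (b i)⁺) := by
    have hzero : ∀ i ∈ s, ¬(0 ≤ a i ∨ 0 ≤ b i) → (a i)⁺ = 0 ∧ (b i)⁺ = 0 := fun i _ hi => by
      simp only [not_or, not_le] at hi
      exact ⟨posPart_eq_zero.mpr hi.1.le, posPart_eq_zero.mpr hi.2.le⟩
    unfold nuclearSqOfCols
    congr 1 <;> refine Finset.sum_filter_of_ne fun i hi hne => ?_ <;> by_contra hrow <;>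
      simp [hzero i hi hrow] at hne
  rw [← hK]
  exact (nuclearSqOfCols_posPart_le_of_forall fun i hi => (Finset.mem_filter.mp hi).2).trans
    (nuclearSqOfCols_mono (Finset.filter_subset _ s))

end Cols

theorem stmt_12 {d : ℕ} (H : Matrix (Fin d) (Fin 2) ℝ) :
    nuclearNorm (H.map relu) ≤ nuclearNorm H := by
  rw [nuclearNorm_eq_sqrt_nuclearSqOfCols, nuclearNorm_eq_sqrt_nuclearSqOfCols]
  -- `relu t` unfolds to `t⁺`
  exact Real.sqrt_le_sqrt nuclearSqOfCols_posPart_le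
end

section
/- Let $x, y \in \mathbb{R}^d$ be nonzero with $x, y \ge 0$ entrywise, $x^Ty = 0$, and $\|x\| = \|y\|$. For $t \in [0,1]$ let $A^t \in \mathbb{R}^{d\times 2}$ have columns $x - ty$ and $y - tx$. Then the singular values of $A^t$ are $\|x\|(1+t)$ and $\|x\|(1-t)$, with corresponding left singular vectors $(x-y)/(\sqrt{2}\|x\|)$ and $(x+y)/(\sqrt{2}\|x\|)$ and right singular vectors $(1/\sqrt{2})(1,-1)^T$ and $(1/\sqrt{2})(1,1)^T$. In particular, $\|A^t\|_* = 2\|x\|$ and $\sigma(A^t) = A^0$ for all $t \in [0,1]$, where $\sigma$ is the entrywise ReLU. -/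
/-!
With `x ⊥ y` and `‖x‖ = ‖y‖ = c`, the vectors `(x ∓ y) / (√2 c)` are orthonormal and `A^t` maps
`(1, ∓1) / √2` to `c (1 ± t)` times them. For the nuclear norm, the Gram matrix
`Aᵀ A = c² [[1 + t², -2t], [-2t, 1 + t²]]` has eigenvalues `λ₁, λ₂` with `λ₁ + λ₂ = 2 (1 + t²) c²`
and `λ₁ λ₂ = (1 - t²)² c⁴`, so `√λ₁ + √λ₂ = √(λ₁ + λ₂ + 2 √(λ₁ λ₂)) = 2c` when `t² ≤ 1`.
Disjoint supports of `x, y ≥ 0` make the ReLU erase the `-t y` and `-t x` terms.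
-/

open Matrix BigOperators

section Columns

variable {R n : Type*} [CommSemiring R]

def twoCol (p q : n → R) : Matrix n (Fin 2) R := fun i j => if j = 0 then p i else q i

theorem twoCol_mulVec (p q : n → R) (v : Fin 2 → R) : twoCol p q *ᵥ v = v 0 • p + v 1 • q := by
  ext i
  simp [twoCol, mulVec, dotProduct, Fin.sum_univ_two, mul_comm]

variable [Fintype n] (p q : n → R)

theorem twoCol_transpose_mulVec (u : n → R) : (twoCol p q)ᵀ *ᵥ u = ![p ⬝ᵥ u, q ⬝ᵥ u] := by
  ext j
  fin_cases j <;> simp [twoCol, mulVec, dotProduct]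

theorem twoCol_transpose_mul_self :
    (twoCol p q)ᵀ * twoCol p q = !![p ⬝ᵥ p, p ⬝ᵥ q; q ⬝ᵥ p, q ⬝ᵥ q] := by
  ext j k
  fin_cases j <;> fin_cases k <;> simp [twoCol, Matrix.mul_apply, dotProduct]

end Columns

theorem Real.sqrt_add_sqrt_eq {a b : ℝ} (ha : 0 ≤ a) (hb : 0 ≤ b) :
    √a + √b = √(a + b + 2 * √(a * b)) := by
  rw [← Real.sqrt_sq (by positivity : 0 ≤ √a + √b), add_sq, Real.sq_sqrt ha, Real.sq_sqrt hb,
    Real.sqrt_mul ha]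
  congr 1
  ring

theorem nuclearNorm_fin_two {m : ℕ} (A : Matrix (Fin m) (Fin 2) ℝ) :
    nuclearNorm A = √((Aᵀ * A).trace + 2 * √(Aᵀ * A).det) := by
  have hA := Matrix.posSemidef_conjTranspose_mul_self A
  have h0 := hA.eigenvalues_nonneg 0
  have h1 := hA.eigenvalues_nonneg 1
  have htr := hA.isHermitian.trace_eq_sum_eigenvalues
  have hdet := hA.isHermitian.det_eq_prod_eigenvalues
  simp only [conjTranspose_eq_transpose_of_trivial, Fin.sum_univ_two, Fin.prod_univ_two,
    RCLike.ofReal_real_eq_id, id] at htr hdet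
  simp only [nuclearNorm, singVals, Fin.sum_univ_two, htr, hdet]
  exact Real.sqrt_add_sqrt_eq h0 h1

theorem mul_eq_zero_of_dotProduct_eq_zero {n : Type*} [Fintype n] {x y : n → ℝ}
    (hx : ∀ i, 0 ≤ x i) (hy : ∀ i, 0 ≤ y i) (h : x ⬝ᵥ y = 0) (i : n) : x i * y i = 0 :=
  (Finset.sum_eq_zero_iff_of_nonneg fun i _ => mul_nonneg (hx i) (hy i)).mp h i
    (Finset.mem_univ i)

theorem relu_sub_mul_eq {a b t : ℝ} (ha : 0 ≤ a) (hb : 0 ≤ b) (hab : a * b = 0) (ht : 0 ≤ t) :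
    relu (a - t * b) = a := by
  rcases mul_eq_zero.mp hab with rfl | rfl
  · exact max_eq_right (by nlinarith)
  · simpa [relu] using ha

def IsSingularTriple {R m n : Type*} [CommSemiring R] [Fintype m] [Fintype n]
    (A : Matrix m n R) (σ : R) (u : m → R) (v : n → R) : Prop :=
  A *ᵥ v = σ • u ∧ Aᵀ *ᵥ u = σ • v

section OrthogonalPair

variable {n : Type*} [Fintype n] {x y : n → ℝ} {c : ℝ}
  (hxx : x ⬝ᵥ x = c ^ 2) (hyy : y ⬝ᵥ y = c ^ 2) (hxy : x ⬝ᵥ y = 0)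
include hxx hyy hxy

theorem isSingularTriple_twoCol_sub_smul (hc : c ≠ 0) (t : ℝ) {ε : ℝ} (hε : ε ^ 2 = 1) :
    IsSingularTriple (twoCol (x - t • y) (y - t • x)) (c * (1 - ε * t))
      (fun i => (x i + ε * y i) / (√2 * c)) ![1 / √2, ε / √2] := by
  have h2 : √2 ≠ 0 := by positivity
  constructor
  · ext i
    simp only [twoCol_mulVec, Pi.add_apply, Pi.smul_apply, Pi.sub_apply, smul_eq_mul,
      cons_val_zero, cons_val_one, cons_val_fin_one]
    field_simp
    linear_combination (t * y i) * hε
  · have hu : (fun i => (x i + ε * y i) / (√2 * c)) = (√2 * c)⁻¹ • (x + ε • y) := by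
      ext i
      simp [div_eq_inv_mul]
    rw [hu, twoCol_transpose_mulVec]
    simp only [dotProduct_smul, dotProduct_add, sub_dotProduct, smul_dotProduct, hxx, hyy, hxy,
      dotProduct_comm y x, smul_eq_mul]
    ext j
    fin_cases j <;>
      simp only [mul_zero, sub_zero, zero_sub, Fin.zero_eta, Fin.mk_one, Fin.isValue, cons_val_zero,
        cons_val_one, cons_val_fin_one, Pi.smul_apply, smul_eq_mul] <;>
      field_simp
    · ring
    · linear_combination t * hε

end OrthogonalPair

theorem nuclearNorm_twoCol_sub_smul {m : ℕ} {x y : Fin m → ℝ} {c : ℝ}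
    (hxx : x ⬝ᵥ x = c ^ 2) (hyy : y ⬝ᵥ y = c ^ 2) (hxy : x ⬝ᵥ y = 0) (hc : 0 ≤ c)
    {t : ℝ} (ht : t ^ 2 ≤ 1) :
    nuclearNorm (twoCol (x - t • y) (y - t • x)) = 2 * c := by
  have hyx : y ⬝ᵥ x = 0 := by rw [dotProduct_comm, hxy]
  obtain ⟨hpp, hqq, hpq⟩ : (x - t • y) ⬝ᵥ (x - t • y) = (1 + t ^ 2) * c ^ 2 ∧
      (y - t • x) ⬝ᵥ (y - t • x) = (1 + t ^ 2) * c ^ 2 ∧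
      (x - t • y) ⬝ᵥ (y - t • x) = -(2 * t * c ^ 2) := by
    refine ⟨?_, ?_, ?_⟩ <;>
    · simp only [dotProduct_sub, sub_dotProduct, dotProduct_smul, smul_dotProduct, hxx, hyy, hxy,
        hyx, smul_eq_mul]
      ring
  rw [nuclearNorm_fin_two, twoCol_transpose_mul_self, trace_fin_two_of, det_fin_two_of,
    hpp, hqq, hpq, dotProduct_comm, hpq]
  have hdet : (1 + t ^ 2) * c ^ 2 * ((1 + t ^ 2) * c ^ 2) - -(2 * t * c ^ 2) * -(2 * t * c ^ 2) =
      ((1 - t ^ 2) * c ^ 2) ^ 2 := by ring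
  rw [hdet, Real.sqrt_sq (by nlinarith [sq_nonneg c]), ← Real.sqrt_sq (by positivity : 0 ≤ 2 * c)]
  congr 1
  ring

theorem map_relu_twoCol_sub_smul {n : Type*} [Fintype n] {x y : n → ℝ}
    (hx : ∀ i, 0 ≤ x i) (hy : ∀ i, 0 ≤ y i) (hxy : x ⬝ᵥ y = 0) {t : ℝ} (ht : 0 ≤ t) :
    (twoCol (x - t • y) (y - t • x)).map relu = twoCol x y := by
  have hxy' := mul_eq_zero_of_dotProduct_eq_zero hx hy hxy
  ext i j
  fin_cases j
  · exact relu_sub_mul_eq (hx i) (hy i) (hxy' i) ht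
  · exact relu_sub_mul_eq (hy i) (hx i) (by rw [mul_comm, hxy' i]) ht

theorem stmt_17_general {d : ℕ} (x y : Fin d → ℝ) (hx : x ≠ 0)
    (hx0 : ∀ i, 0 ≤ x i) (hy0 : ∀ i, 0 ≤ y i)
    (hortho : x ⬝ᵥ y = 0) (hnorm : x ⬝ᵥ x = y ⬝ᵥ y)
    (t : ℝ) (ht0 : 0 ≤ t) (ht1 : t ≤ 1) :
    letI A : Matrix (Fin d) (Fin 2) ℝ :=
      fun i j => if j = 0 then x i - t * y i else y i - t * x i
    letI A0 : Matrix (Fin d) (Fin 2) ℝ := fun i j => if j = 0 then x i else y i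
    letI c : ℝ := Real.sqrt (x ⬝ᵥ x)
    letI u1 : Fin d → ℝ := fun i => (x i - y i) / (Real.sqrt 2 * c)
    letI u2 : Fin d → ℝ := fun i => (x i + y i) / (Real.sqrt 2 * c)
    letI v1 : Fin 2 → ℝ := ![1 / Real.sqrt 2, -(1 / Real.sqrt 2)]
    letI v2 : Fin 2 → ℝ := ![1 / Real.sqrt 2, 1 / Real.sqrt 2]
    A *ᵥ v1 = (c * (1 + t)) • u1 ∧
    Aᵀ *ᵥ u1 = (c * (1 + t)) • v1 ∧
    A *ᵥ v2 = (c * (1 - t)) • u2 ∧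
    Aᵀ *ᵥ u2 = (c * (1 - t)) • v2 ∧
    nuclearNorm A = 2 * c ∧
    A.map relu = A0 := by
  set c := √(x ⬝ᵥ x)
  have hxx : x ⬝ᵥ x = c ^ 2 :=
    (Real.sq_sqrt (Finset.sum_nonneg fun i _ => mul_self_nonneg (x i))).symm
  have hyy : y ⬝ᵥ y = c ^ 2 := hnorm ▸ hxx
  have hc : c ≠ 0 := fun h => hx (dotProduct_self_eq_zero.mp (by rw [hxx, h]; ring))
  obtain ⟨h1, h1'⟩ :=
    isSingularTriple_twoCol_sub_smul hxx hyy hortho hc t (ε := -1) (by norm_num)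
  obtain ⟨h2, h2'⟩ :=
    isSingularTriple_twoCol_sub_smul hxx hyy hortho hc t (ε := 1) (by norm_num)
  simp only [neg_one_mul, ← sub_eq_add_neg, neg_div, sub_neg_eq_add, one_mul] at h1 h1' h2 h2'
  exact ⟨h1, h1', h2, h2',
    nuclearNorm_twoCol_sub_smul hxx hyy hortho (Real.sqrt_nonneg _) (by nlinarith),
    map_relu_twoCol_sub_smul hx0 hy0 hortho ht0⟩

theorem stmt_17 {d : ℕ} (x y : Fin d → ℝ) (hx : x ≠ 0) (hy : y ≠ 0)
    (hx0 : ∀ i, 0 ≤ x i) (hy0 : ∀ i, 0 ≤ y i)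
    (hortho : x ⬝ᵥ y = 0) (hnorm : x ⬝ᵥ x = y ⬝ᵥ y)
    (t : ℝ) (ht0 : 0 ≤ t) (ht1 : t ≤ 1) :
    letI A : Matrix (Fin d) (Fin 2) ℝ :=
      fun i j => if j = 0 then x i - t * y i else y i - t * x i
    letI A0 : Matrix (Fin d) (Fin 2) ℝ := fun i j => if j = 0 then x i else y i
    letI c : ℝ := Real.sqrt (x ⬝ᵥ x)
    letI u1 : Fin d → ℝ := fun i => (x i - y i) / (Real.sqrt 2 * c)
    letI u2 : Fin d → ℝ := fun i => (x i + y i) / (Real.sqrt 2 * c)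
    letI v1 : Fin 2 → ℝ := ![1 / Real.sqrt 2, -(1 / Real.sqrt 2)]
    letI v2 : Fin 2 → ℝ := ![1 / Real.sqrt 2, 1 / Real.sqrt 2]
    A *ᵥ v1 = (c * (1 + t)) • u1 ∧
    Aᵀ *ᵥ u1 = (c * (1 + t)) • v1 ∧
    A *ᵥ v2 = (c * (1 - t)) • u2 ∧
    Aᵀ *ᵥ u2 = (c * (1 - t)) • v2 ∧
    nuclearNorm A = 2 * c ∧
    A.map relu = A0 :=
  stmt_17_general x y hx hx0 hy0 hortho hnorm t ht0 ht1
end
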